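/- In the abstract deducibility setting with compactness, Tarski_T implies the weak syntactic diagonal lemma Carnap_T: if for every formula Υ the set T ∪ {Υ(⌜σ⌝) ↔ σ : σ a sentence} is inconsistent, then for every formula Λ there exist finitely many sentences A₁,…,A_k with T ⊢ ⋁_i (Λ(⌜A_i⌝) ↔ A_i). -/

import Mathlib

/-- Finite disjunction `a ∨ s₁ ∨ ⋯ ∨ s_k` of a nonempty family of sentences. -/
def bigOr {Sentence : Type} (orS : Sentence → Sentence → Sentence) :
    Sentence → List Sentence → Sentence
  | a, [] => a
  | a, b :: l => orS a (bigOr orS b l)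

/-- Finite conjunction `a ∧ s₁ ∧ ⋯ ∧ s_k` of a nonempty family of sentences. -/
def bigAnd {Sentence : Type} (andS : Sentence → Sentence → Sentence) :
    Sentence → List Sentence → Sentence
  | a, [] => a
  | a, b :: l => andS a (bigAnd andS b l)

theorem List.exists_map_eq_cons_of_forall_mem_range {α β : Type*} {f : α → β} {b : β}
    {l : List β} (h : ∀ x ∈ b :: l, x ∈ Set.range f) :
    ∃ (a : α) (l' : List α), f a = b ∧ l'.map f = l := by
  obtain ⟨_ | ⟨a, l'⟩, hmap⟩ : b :: l ∈ Set.range (List.map f) := by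
    rwa [Set.range_list_map]
  · cases hmap
  · exact ⟨a, l', List.cons_eq_cons.mp hmap⟩

/-- Tarski_T implies the weak syntactic diagonal lemma (Carnap_T), via compactness. -/
theorem tarski_implies_carnap
    (Sentence : Type) (Formula : Type)
    (neg : Sentence → Sentence)
    (andS orS iffS : Sentence → Sentence → Sentence)
    (app : Formula → Sentence → Sentence)
    (negF : Formula → Formula)                     -- Υ := ¬Λ
    (hnegF : ∀ Λ σ, app (negF Λ) σ = neg (app Λ σ))
    (Prov : Set Sentence → Sentence → Prop)
    (Consistent : Set Sentence → Prop)
    (T : Set Sentence)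
    -- compactness: an inconsistent extension of T has a finite inconsistent part
    (compact : ∀ X : Set Sentence, ¬ Consistent (T ∪ X) →
      ∃ a : Sentence, ∃ l : List Sentence, (∀ s ∈ a :: l, s ∈ X) ∧
        ¬ Consistent (T ∪ {s | s ∈ a :: l}))
    -- reductio: from a finite inconsistency, T proves the negated conjunction
    (hred : ∀ (a : Sentence) (l : List Sentence),
      ¬ Consistent (T ∪ {s | s ∈ a :: l}) → Prov T (neg (bigAnd andS a l)))
    -- the propositional tautology ¬⋀ᵢ(¬pᵢ ↔ qᵢ) ≡ ⋁ᵢ(pᵢ ↔ qᵢ)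
    (htaut : ∀ (Λ : Formula) (A : Sentence) (l : List Sentence),
      Prov T (neg (bigAnd andS (iffS (neg (app Λ A)) A)
        (l.map fun σ => iffS (neg (app Λ σ)) σ))) →
      Prov T (bigOr orS (iffS (app Λ A) A) (l.map fun σ => iffS (app Λ σ) σ)))
    -- Tarski_T:
    (tarski : ∀ Υ : Formula,
      ¬ Consistent (T ∪ {s | ∃ σ, s = iffS (app Υ σ) σ})) :
    -- Carnap_T: finitely many sentences whose partial-fixed-point disjunction is provable
    ∀ Λ : Formula, ∃ (A : Sentence) (l : List Sentence),
      Prov T (bigOr orS (iffS (app Λ A) A) (l.map fun σ => iffS (app Λ σ) σ)) := by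
  intro Λ
  obtain ⟨b, l, hsub, hinc⟩ := compact _ (tarski (negF Λ))
  obtain ⟨A, l', rfl, rfl⟩ :=
    List.exists_map_eq_cons_of_forall_mem_range (f := fun σ => iffS (neg (app Λ σ)) σ)
      fun s hs => by
        obtain ⟨σ, rfl⟩ := hsub s hs
        exact ⟨σ, by rw [hnegF]⟩
  exact ⟨A, l', htaut Λ A l' (hred _ _ hinc)⟩
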